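/- The element c = a·b·a, where a = diag(e^{iπ/5}, e^{−iπ/5}) and b = R_y(arctan 2)·a·R_y(−arctan 2), satisfies c² = −I in SU(2); hence its image in SO(3) ≅ SU(2)/{±I} has order 2. -/

import Mathlib

open Complex

noncomputable def Ry (α : ℝ) : Matrix (Fin 2) (Fin 2) ℂ :=
  !![(Real.cos (α / 2) : ℂ), -(Real.sin (α / 2) : ℂ);
     (Real.sin (α / 2) : ℂ), (Real.cos (α / 2) : ℂ)]

noncomputable def aRot : Matrix (Fin 2) (Fin 2) ℂ :=
  !![Complex.exp (I * (Real.pi / 5)), 0; 0, Complex.exp (-I * (Real.pi / 5))]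

noncomputable def bRot : Matrix (Fin 2) (Fin 2) ℂ :=
  Ry (Real.arctan 2) * aRot * Ry (-Real.arctan 2)

noncomputable def cRot : Matrix (Fin 2) (Fin 2) ℂ := aRot * bRot * aRot

lemma cayley_fin_two (M : Matrix (Fin 2) (Fin 2) ℂ) :
    M ^ 2 = M.trace • M - M.det • 1 := by
  ext i j
  fin_cases i <;> fin_cases j <;>
    simp [pow_two, Matrix.mul_apply, Matrix.trace, Matrix.det_fin_two, Fin.sum_univ_two,
      Matrix.one_apply] <;> ring

lemma cRot_det : cRot.det = 1 := by
  simp only [cRot, bRot, aRot, Ry, Matrix.det_mul, Matrix.det_fin_two_of]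
  have h1 : Complex.exp (I * (Real.pi/5)) * Complex.exp (-I * (Real.pi/5)) = 1 := by
    rw [← Complex.exp_add]; ring_nf; exact Complex.exp_zero
  have h2 : ∀ α : ℝ, ((Real.cos α : ℂ) * (Real.cos α) - (-(Real.sin α)) * (Real.sin α)) = 1 := by
    intro α; push_cast; norm_cast; rw [← Real.sin_sq_add_cos_sq α]; ring
  rw [h1, h2, h2]
  ring
lemma cRot_trace : cRot.trace = 0 := by
  have he : Complex.exp (I * (Real.pi/5)) =
      (Real.cos (Real.pi/5) : ℂ) + (Real.sin (Real.pi/5) : ℂ) * I := by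
    rw [show (I * ((Real.pi:ℂ)/5)) = ((Real.pi/5 : ℝ) : ℂ) * I by push_cast; ring,
      Complex.exp_mul_I, ← Complex.ofReal_cos, ← Complex.ofReal_sin]
  have he' : Complex.exp (-I * (Real.pi/5)) =
      (Real.cos (Real.pi/5) : ℂ) - (Real.sin (Real.pi/5) : ℂ) * I := by
    rw [show (-I * ((Real.pi:ℂ)/5)) = ((-(Real.pi/5) : ℝ) : ℂ) * I by push_cast; ring,
      Complex.exp_mul_I, ← Complex.ofReal_cos, ← Complex.ofReal_sin,
      Real.cos_neg, Real.sin_neg]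
    push_cast; ring
  have h5 : Real.sqrt 5 ^ 2 = 5 := Real.sq_sqrt (by norm_num)
  have hcθ : Real.cos (Real.pi * (1/5)) = (1 + Real.sqrt 5)/4 := by
    rw [show Real.pi * (1/5) = Real.pi / 5 by ring, Real.cos_pi_div_five]
  have hsθ : Real.sin (Real.pi * (1/5))^2 = 1 - ((1 + Real.sqrt 5)/4)^2 := by
    rw [Real.sin_sq, hcθ]
  have hc1 : Real.cos (Real.arctan 2 * (1/2))^2 = 1/2 + Real.sqrt 5/10 := by
    rw [Real.cos_sq, show 2 * (Real.arctan 2 * (1/2)) = Real.arctan 2 by ring,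
      Real.cos_arctan, show (1:ℝ) + 2^2 = 5 by norm_num]
    have h5p : Real.sqrt 5 > 0 := by positivity
    field_simp
    linear_combination -2 * h5
  have hs1 : Real.sin (Real.arctan 2 * (1/2))^2 = 1/2 - Real.sqrt 5/10 := by
    rw [Real.sin_sq, hc1]; ring
  have key : -6 * (Real.cos (Real.pi * (1/5)) * Real.sin (Real.pi * (1/5))^2 *
        Real.cos (Real.arctan 2 * (1/2))^2)
      + 2 * (Real.cos (Real.pi * (1/5)) * Real.sin (Real.pi * (1/5))^2 *
        Real.sin (Real.arctan 2 * (1/2))^2)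
      + 2 * Real.cos (Real.pi * (1/5))^3 * Real.cos (Real.arctan 2 * (1/2))^2
      + 2 * Real.cos (Real.pi * (1/5))^3 * Real.sin (Real.arctan 2 * (1/2))^2 = 0 := by
    rw [hcθ, hsθ, hc1, hs1]
    linear_combination (Real.sqrt 5^2/80 + Real.sqrt 5/10 + 7/80) * h5
  simp only [cRot, bRot, aRot, Ry, Matrix.mul_fin_two, Matrix.trace_fin_two_of,
    neg_div, Real.cos_neg, Real.sin_neg, Complex.ofReal_neg, he, he']
  ring_nf
  simp only [Complex.I_sq]
  norm_cast
  push_cast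
  linear_combination key

theorem c_squared_eq_neg_one :
    cRot ^ 2 = -1 ∧ cRot ≠ 1 ∧ cRot ≠ -1 := by
  have hsq : cRot ^ 2 = -1 := by
    rw [cayley_fin_two, cRot_trace, cRot_det, zero_smul, one_smul, zero_sub]
  refine ⟨hsq, ?_, ?_⟩
  · intro h
    rw [h, one_pow] at hsq
    have := congrFun (congrFun hsq 0) 0
    simp [Matrix.one_apply] at this
    norm_num at this
  · intro h
    rw [h, neg_one_sq] at hsq
    have := congrFun (congrFun hsq 0) 0
    simp [Matrix.one_apply] at this
    norm_num at this
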